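/- arXiv:2507.14720 — 2 statements merged into one kernel-verified Lean document; each statement's English description precedes it below -/
import Mathlib

section
/- The lattice of cyclic flats of a matroid M, ordered by inclusion, is isomorphic to the order dual of the lattice of cyclic flats of the dual matroid M*, via the map F ↦ E(M) - F. -/
open Set Matroid
open scoped Matroid

namespace MatroidPaper

variable {α : Type*} {β : Type*}

/-- A circuit of a matroid is a minimal dependent set. -/
def Circuit (M : Matroid α) (C : Set α) : Prop := Minimal M.Dep C

/-- A set is cyclic if it is a union of circuits. -/
def Cyclic (M : Matroid α) (X : Set α) : Prop :=
  ∃ S : Set (Set α), (∀ C ∈ S, Circuit M C) ∧ X = ⋃₀ S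

/-- A cyclic flat is a flat that is a union of circuits. -/
def CyclicFlat (M : Matroid α) (F : Set α) : Prop := M.IsFlat F ∧ Cyclic M F

/-- The rank of a set in a matroid: the supremum of sizes of independent subsets. -/
noncomputable def rk (M : Matroid α) (X : Set α) : ℕ :=
  sSup {n | ∃ I, I ⊆ X ∧ M.Indep I ∧ I.ncard = n}

/-- `e` is a loop of `M`. -/
def Loop (M : Matroid α) (e : α) : Prop := M.Dep {e}

/-- `e` is a coloop of `M`, i.e. a loop of the dual. -/
def Coloop (M : Matroid α) (e : α) : Prop := M✶.Dep {e}

/-- Deletion of a set of elements. -/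
def delete (M : Matroid α) (D : Set α) : Matroid α := M ↾ (M.E \ D)

/-- Contraction of a set of elements. -/
def contract (M : Matroid α) (C : Set α) : Matroid α := (delete M✶ C)✶

open Classical in
/-- The Tutte polynomial of a (finite) matroid, as a polynomial in two
variables `X 0` (usually `x`) and `X 1` (usually `y`). -/
noncomputable def tutte (M : Matroid α) : MvPolynomial (Fin 2) ℤ :=
  if hE : M.E.Finite then
    ∑ A ∈ hE.toFinset.powerset,
      (MvPolynomial.X 0 - 1) ^ (rk M M.E - rk M ↑A) *
        (MvPolynomial.X 1 - 1) ^ (A.card - rk M ↑A)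
  else 0

/-- The coefficient of `x^i y^j` in the Tutte polynomial. -/
noncomputable def tcoeff (M : Matroid α) (i j : ℕ) : ℤ :=
  MvPolynomial.coeff (Finsupp.single 0 i + Finsupp.single 1 j) (tutte M)

/-- Matroid isomorphism. -/
def Iso (M : Matroid α) (N : Matroid β) : Prop :=
  ∃ (f : α → β) (hf : Set.InjOn f M.E), M.map f hf = N

/-- A matroid is connected if it is nonempty and every two distinct elements
lie in a common circuit. -/
def Connected (M : Matroid α) : Prop :=
  M.E.Nonempty ∧ ∀ ⦃e f⦄, e ∈ M.E → f ∈ M.E → e ≠ f →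
    ∃ C, Circuit M C ∧ e ∈ C ∧ f ∈ C

/-- The connected component of an element. -/
def component (M : Matroid α) (e : α) : Set α :=
  {f | f ∈ M.E ∧ Relation.ReflTransGen (fun x y => ∃ C, Circuit M C ∧ x ∈ C ∧ y ∈ C) e f}

/-- The number of connected components of a matroid. -/
noncomputable def numComponents (M : Matroid α) : ℕ :=
  Set.ncard {X : Set α | ∃ e ∈ M.E, X = component M e}

/-- A matroid is simple if all sets of at most two elements of the ground set
are independent. -/
def Simple (M : Matroid α) : Prop :=
  ∀ ⦃e f⦄, e ∈ M.E → f ∈ M.E → M.Indep {e, f}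

/-- A set of edges of a complete graph is a forest if no edge is a loop and
every nonempty subset uses more vertices than it has edges. -/
def IsForest {n : ℕ} (X : Set (Sym2 (Fin n))) : Prop :=
  (∀ e ∈ X, ¬ e.IsDiag) ∧
    ∀ Y ⊆ X, Y.Nonempty → Y.ncard < {v | ∃ e ∈ Y, v ∈ e}.ncard

/-- `M` is isomorphic to the cycle matroid of the complete graph `K n`. -/
def IsCycleMatroidK (M : Matroid α) (n : ℕ) : Prop :=
  ∃ f : α → Sym2 (Fin n), Set.BijOn f M.E {e | ¬ e.IsDiag} ∧
    ∀ I ⊆ M.E, (M.Indep I ↔ IsForest (f '' I))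


section Aux
variable {M : Matroid α} {X W Z C F : Set α} {e : α}

/-! ### Closure / base auxiliary lemmas -/

lemma not_mem_closure_iff_exists_base (hW : W ⊆ M.E) (he : e ∈ M.E) (heW : e ∉ W) :
    e ∉ M.closure W ↔ ∃ B, M.IsBase B ∧ e ∈ B ∧ M.IsBasis (B ∩ W) W := by
  constructor
  · intro hecl
    obtain ⟨I, hI⟩ := M.exists_isBasis W hW
    have hecl' : e ∉ M.closure I := by rwa [hI.closure_eq_closure]
    have heI : e ∉ I := fun h => heW (hI.subset h)
    have hins : M.Indep (insert e I) := by
      rw [hI.indep.insert_indep_iff_of_notMem heI]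
      exact ⟨he, hecl'⟩
    obtain ⟨B, hB, hIB⟩ := hins.exists_isBase_superset
    have hIB' : I ⊆ B := (subset_insert _ _).trans hIB
    have hBW : B ∩ W = I := by
      apply Subset.antisymm _ (subset_inter hIB' hI.subset)
      rintro x ⟨hxB, hxW⟩
      by_contra hxI
      have hxcl : x ∈ M.closure I := hI.subset_closure hxW
      have : M.Indep (insert x I) := hB.indep.subset (insert_subset hxB hIB')
      rw [hI.indep.insert_indep_iff_of_notMem hxI] at this
      exact this.2 hxcl
    exact ⟨B, hB, hIB (mem_insert _ _), hBW ▸ hI⟩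
  · rintro ⟨B, hB, heB, hBW⟩ hecl
    have heBW : e ∉ B ∩ W := fun h => heW h.2
    have hecl' : e ∈ M.closure (B ∩ W) := by rwa [hBW.closure_eq_closure]
    have : M.Indep (insert e (B ∩ W)) :=
      hB.indep.subset (insert_subset heB inter_subset_left)
    rw [hBW.indep.insert_indep_iff_of_notMem heBW] at this
    exact this.2 hecl'

lemma mem_closure_iff_exists_basis_insert (hZ : Z ⊆ M.E) (he : e ∈ M.E) (heZ : e ∉ Z) :
    e ∈ M.closure Z ↔ ∃ J, M.IsBasis J (insert e Z) ∧ e ∉ J := by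
  constructor
  · intro hecl
    obtain ⟨J, hJ⟩ := M.exists_isBasis Z hZ
    have heJ : e ∉ J := fun h => heZ (hJ.subset h)
    refine ⟨J, ?_, heJ⟩
    refine hJ.indep.isBasis_of_subset_of_subset_closure (hJ.subset.trans (subset_insert _ _)) ?_
    refine insert_subset ?_ hJ.subset_closure
    rwa [hJ.closure_eq_closure]
  · rintro ⟨J, hJ, heJ⟩
    have hJZ : J ⊆ Z := fun x hx => (hJ.subset hx).resolve_left (fun h => heJ (h ▸ hx))
    exact M.closure_subset_closure hJZ (hJ.subset_closure (mem_insert _ _))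

/-- The key duality lemma. -/
lemma mem_dual_closure_iff (M : Matroid α) (hX : X ⊆ M.E) (he : e ∈ X) :
    e ∈ M✶.closure (X \ {e}) ↔ e ∉ M.closure (M.E \ X) := by
  have heE : e ∈ M.E := hX he
  have hWZ : M.E \ (M.E \ X) = X := diff_diff_cancel_left hX
  rw [not_mem_closure_iff_exists_base diff_subset heE (fun h => h.2 he)]
  rw [mem_closure_iff_exists_basis_insert (M := M✶) (Z := X \ {e}) (diff_subset.trans hX) heE
    (fun h => h.2 rfl), insert_diff_singleton, insert_eq_self.mpr he]
  constructor
  · rintro ⟨J, hJ, heJ⟩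
    obtain ⟨Bs, hBs, rfl⟩ := hJ.exists_isBase
    have heBs : e ∉ Bs := fun h => heJ ⟨h, he⟩
    refine ⟨M.E \ Bs, hBs.compl_isBase_of_dual, ⟨heE, heBs⟩, ?_⟩
    have hBsE : Bs ⊆ M.E := hBs.subset_ground
    rw [hBs.compl_isBase_of_dual.inter_isBasis_iff_compl_inter_isBasis_dual diff_subset,
      diff_diff_cancel_left hBsE, hWZ]
    exact hJ
  · rintro ⟨B, hB, heB, hBW⟩
    refine ⟨(M.E \ B) ∩ X, ?_, fun h => h.1.2 heB⟩
    have := (hB.inter_isBasis_iff_compl_inter_isBasis_dual diff_subset).mp hBW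
    rwa [hWZ] at this

/-! ### Circuits and cyclic sets -/

lemma Circuit.mem_closure_diff_singleton (hC : Circuit M C) (he : e ∈ C) :
    e ∈ M.closure (C \ {e}) := by
  have hCE : C ⊆ M.E := hC.prop.subset_ground
  have hind : M.Indep (C \ {e}) := by
    rw [← not_dep_iff (diff_subset.trans hCE)]
    intro hd
    exact (hC.2 hd diff_subset he).2 rfl
  rw [hind.mem_closure_iff_of_notMem (fun h => h.2 rfl), insert_diff_singleton,
    insert_eq_self.mpr he]
  exact hC.prop

lemma exists_circuit_subset (hX : M.Dep X) (hfin : X.Finite) : ∃ C, C ⊆ X ∧ Circuit M C := by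
  classical
  have hex : ∃ n, ∃ Y, Y ⊆ X ∧ M.Dep Y ∧ Y.ncard = n := ⟨_, X, Subset.rfl, hX, rfl⟩
  obtain ⟨Y, hYX, hYdep, hYcard⟩ := Nat.find_spec hex
  refine ⟨Y, hYX, hYdep, fun Z hZ hZY => ?_⟩
  by_contra hsub
  have hlt : Z.ncard < Y.ncard := Set.ncard_lt_ncard ⟨hZY, hsub⟩ (hfin.subset hYX)
  have hle : Nat.find hex ≤ Z.ncard := Nat.find_min' hex ⟨Z, hZY.trans hYX, hZ, rfl⟩
  omega

lemma cyclic_iff (hE : M.E.Finite) :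
    Cyclic M X ↔ X ⊆ M.E ∧ ∀ e ∈ X, e ∈ M.closure (X \ {e}) := by
  constructor
  · rintro ⟨S, hS, rfl⟩
    refine ⟨sUnion_subset fun C hC => (hS C hC).prop.subset_ground, ?_⟩
    rintro e ⟨C, hCS, heC⟩
    exact M.closure_subset_closure (diff_subset_diff_left (subset_sUnion_of_mem hCS))
      ((hS C hCS).mem_closure_diff_singleton heC)
  · rintro ⟨hXE, h⟩
    refine ⟨{C | Circuit M C ∧ C ⊆ X}, fun C hC => hC.1, ?_⟩
    refine Subset.antisymm (fun e he => ?_) (sUnion_subset fun C hC => hC.2)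
    obtain ⟨I, hI⟩ := M.exists_isBasis (X \ {e}) (diff_subset.trans hXE)
    have he' : e ∈ M.closure I := by rw [hI.closure_eq_closure]; exact h e he
    have heI : e ∉ I := fun h' => (hI.subset h').2 rfl
    have hdep : M.Dep (insert e I) := by
      rwa [← hI.indep.mem_closure_iff_of_notMem heI]
    obtain ⟨C, hCsub, hC⟩ := exists_circuit_subset hdep
      (hE.subset (insert_subset (hXE he) hI.indep.subset_ground))
    have heC : e ∈ C := by
      by_contra hec
      have hCI : C ⊆ I := fun x hx => (hCsub hx).resolve_left (fun h' => hec (h' ▸ hx))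
      exact hC.prop.1 (hI.indep.subset hCI)
    exact mem_sUnion.2 ⟨C, ⟨hC, hCsub.trans (insert_subset he (hI.subset.trans diff_subset))⟩, heC⟩

/-! ### Flats vs complements -/

lemma flat_of_forall (hF : F ⊆ M.E) (h : ∀ e ∈ M.E \ F, e ∉ M.closure F) : M.IsFlat F := by
  refine ⟨fun I X hIF hIX x hx => ?_, hF⟩
  by_contra hxF
  exact h x ⟨hIX.subset_ground hx, hxF⟩
    (hIF.closure_eq_closure ▸ hIX.subset_closure hx)

lemma flat_iff_compl_cyclic (M : Matroid α) (hE : M.E.Finite) (hF : F ⊆ M.E) :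
    M.IsFlat F ↔ Cyclic M✶ (M.E \ F) := by
  rw [cyclic_iff (M := M✶) (by simpa using hE)]
  constructor
  · intro hFl
    refine ⟨diff_subset, fun e he => ?_⟩
    rw [mem_dual_closure_iff M diff_subset he, diff_diff_cancel_left hF, hFl.closure]
    exact he.2
  · rintro ⟨-, h⟩
    refine flat_of_forall hF fun e heEF hecl => ?_
    have := h e heEF
    rw [mem_dual_closure_iff M diff_subset heEF, diff_diff_cancel_left hF] at this
    exact this hecl

lemma CyclicFlat.compl_dual (hE : M.E.Finite) (h : CyclicFlat M F) :
    CyclicFlat M✶ (M.E \ F) := by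
  have hF : F ⊆ M.E := h.1.subset_ground
  constructor
  · rw [flat_iff_compl_cyclic M✶ (by simpa using hE) (show M.E \ F ⊆ M✶.E from diff_subset)]
    rw [show M✶.E = M.E from rfl, diff_diff_cancel_left hF, dual_dual]
    exact h.2
  · rw [← flat_iff_compl_cyclic M hE hF]
    exact h.1

end Aux

/-- the lattice of cyclic flats of `M` is isomorphic to the order
dual of the lattice of cyclic flats of `M✶`, via `F ↦ M.E \ F`. -/
theorem cyclicFlats_orderIso_dual (M : Matroid α) (hE : M.E.Finite) :
    ∃ e : {F : Set α // CyclicFlat M F} ≃o ({F : Set α // CyclicFlat M✶ F})ᵒᵈ,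
      ∀ F : {F : Set α // CyclicFlat M F},
        (OrderDual.ofDual (e F)).1 = M.E \ F.1 := by
  have key' : ∀ F, CyclicFlat M✶ F → CyclicFlat M (M.E \ F) := by
    intro F h
    have := h.compl_dual (M := M✶) (by simpa using hE)
    rwa [dual_dual, show M✶.E = M.E from rfl] at this
  refine ⟨⟨⟨fun F => OrderDual.toDual ⟨M.E \ F.1, F.2.compl_dual hE⟩,
      fun G => ⟨M.E \ (OrderDual.ofDual G).1, key' _ (OrderDual.ofDual G).2⟩,
      fun F => ?_, fun G => ?_⟩, ?_⟩, fun F => rfl⟩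
  · exact Subtype.ext (diff_diff_cancel_left F.2.1.subset_ground)
  · exact OrderDual.toDual.injective
      (Subtype.ext (diff_diff_cancel_left (OrderDual.ofDual G).2.1.subset_ground))
  · rintro ⟨F₁, h₁⟩ ⟨F₂, h₂⟩
    simp only [Equiv.coe_fn_mk, OrderDual.toDual_le_toDual, Subtype.mk_le_mk]
    change M.E \ F₂ ⊆ M.E \ F₁ ↔ F₁ ⊆ F₂
    constructor
    · intro h x hx
      by_contra hx2
      exact (h ⟨h₁.1.subset_ground hx, hx2⟩).2 hx
    · exact fun h => diff_subset_diff_right h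

end MatroidPaper
end

section
/- Let M be a rank-r matroid on α_r elements in which the set of loops has exactly α₀ elements, and let α₀ < α₁ < ⋯ < α_r be integers. Then the number of flags F₀ ⊊ F₁ ⊊ ⋯ ⊊ F_r of flats of M with r(F_i) = i and |F_i| = α_i for all i is at most ∏_{i=0}^{r−1} (α_r − α_i)/(α_{i+1} − α_i), with equality if and only if M is a perfect matroid design with flat-size sequence α₀, α₁, …, α_r. -/
open Set Matroid
open scoped Matroid

namespace MatroidPaper

variable {α : Type*} {β : Type*}

/-- The number of flags of flats `F₀ ⊊ F₁ ⊊ ⋯ ⊊ F_r` with `rk (F i) = i` and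
`|F i| = a i` for all `i`. -/
noncomputable def flagCount (M : Matroid α) (r : ℕ) (a : ℕ → ℕ) : ℕ :=
  Set.ncard {F : Fin (r + 1) → Set α | StrictMono F ∧
    ∀ i : Fin (r + 1), M.IsFlat (F i) ∧ rk M (F i) = (i : ℕ) ∧ (F i).ncard = a (i : ℕ)}

/-- `M` is a perfect matroid design with flat-size sequence `a 0, …, a r`. -/
def IsPMD (M : Matroid α) (r : ℕ) (a : ℕ → ℕ) : Prop :=
  ∀ i ≤ r, ∀ F : Set α, M.IsFlat F → rk M F = i → F.ncard = a i

section Aux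

variable {M : Matroid α} {F G H X I J : Set α} {e : α} {k : ℕ}

lemma flat_closure (M : Matroid α) (X : Set α) : M.IsFlat (M.closure X) :=
  ⟨fun I Y hI hY => hY.subset_closure.trans
      (by rw [hI.closure_eq_closure, closure_closure]),
    M.closure_subset_ground X⟩

lemma rk_eq_of_basis (hI : M.IsBasis I X) (hX : X.Finite) : rk M X = I.ncard := by
  have hIfin : I.Finite := hX.subset hI.subset
  have hub : ∀ n ∈ {n | ∃ I, I ⊆ X ∧ M.Indep I ∧ I.ncard = n}, n ≤ I.ncard := by
    rintro n ⟨J, hJX, hJ, rfl⟩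
    have hJfin : J.Finite := hX.subset hJX
    by_contra hlt
    push_neg at hlt
    have henc : I.encard < J.encard := by
      rw [← hIfin.cast_ncard_eq, ← hJfin.cast_ncard_eq]
      exact_mod_cast hlt
    obtain ⟨e, he, hins⟩ := hI.indep.augment hJ henc
    have := hI.eq_of_subset_indep hins (subset_insert _ _)
      (insert_subset (hJX he.1) hI.subset)
    exact he.2 (this ▸ mem_insert _ _)
  refine le_antisymm (csSup_le ⟨0, ∅, empty_subset _, M.empty_indep, by simp⟩ hub) ?_
  exact le_csSup ⟨I.ncard, hub⟩ ⟨I, hI.subset, hI.indep, rfl⟩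

lemma indep_ncard_le_rk (hE : M.E.Finite) (hIX : I ⊆ X) (hI : M.Indep I)
    (hX : X ⊆ M.E) : I.ncard ≤ rk M X := by
  obtain ⟨J, hJ, hIJ⟩ := hI.subset_isBasis_of_subset hIX hX
  rw [rk_eq_of_basis hJ (hE.subset hX)]
  exact ncard_le_ncard hIJ (hE.subset (hJ.indep.subset_ground))

lemma rk_mono (hE : M.E.Finite) (hXY : X ⊆ Y) (hY : Y ⊆ M.E) : rk M X ≤ rk M Y := by
  obtain ⟨I, hI⟩ := M.exists_isBasis X (hXY.trans hY)
  rw [rk_eq_of_basis hI (hE.subset (hXY.trans hY))]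
  exact indep_ncard_le_rk hE (hI.subset.trans hXY) hI.indep hY

lemma rk_closure_eq (hE : M.E.Finite) (hX : X ⊆ M.E) :
    rk M (M.closure X) = rk M X := by
  obtain ⟨I, hI⟩ := M.exists_isBasis X hX
  rw [rk_eq_of_basis hI (hE.subset hX), rk_eq_of_basis hI.isBasis_closure_right (hE.subset (M.closure_subset_ground X))]

lemma rk_loops (hE : M.E.Finite) : rk M (M.closure ∅) = 0 := by
  rw [rk_eq_of_basis M.empty_indep.isBasis_closure (hE.subset (M.closure_subset_ground ∅))]
  simp

lemma rk_lt_of_ssubset (hE : M.E.Finite) (hF : M.IsFlat F) (hG : M.IsFlat G)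
    (hFG : F ⊂ G) : rk M F < rk M G := by
  obtain ⟨I, hI⟩ := M.exists_isBasis F hF.subset_ground
  obtain ⟨e, heG, heF⟩ := exists_of_ssubset hFG
  have heI : e ∉ I := fun h => heF (hI.subset h)
  have hecl : e ∉ M.closure I := by
    rw [hI.closure_eq_closure, hF.closure]; exact heF
  have hins : M.Indep (insert e I) := by
    rw [hI.indep.insert_indep_iff_of_notMem heI]
    exact ⟨hG.subset_ground heG, hecl⟩
  have hsub : insert e I ⊆ G := insert_subset heG (hI.subset.trans hFG.subset)
  have := indep_ncard_le_rk hE hsub hins hG.subset_ground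
  rw [ncard_insert_of_notMem heI ((hE.subset hF.subset_ground).subset hI.subset)] at this
  rw [rk_eq_of_basis hI (hE.subset hF.subset_ground)]
  omega

lemma rk_closure_insert (hE : M.E.Finite) (hF : M.IsFlat F) (heE : e ∈ M.E) (heF : e ∉ F) :
    rk M (M.closure (insert e F)) = rk M F + 1 := by
  obtain ⟨I, hI⟩ := M.exists_isBasis F hF.subset_ground
  have heI : e ∉ I := fun h => heF (hI.subset h)
  have hins : M.Indep (insert e I) := by
    rw [hI.indep.insert_indep_iff_of_notMem heI]
    rw [hI.closure_eq_closure, hF.closure]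
    exact ⟨heE, heF⟩
  have hclins : M.closure (insert e I) = M.closure (insert e F) := by
    rw [show M.closure (insert e I) = M.closure (insert e (M.closure I)) by
        rw [closure_insert_closure_eq_closure_insert],
      hI.closure_eq_closure, hF.closure]
  have h1 : rk M (M.closure (insert e F)) = (insert e I).ncard := by
    rw [← hclins]
    exact rk_eq_of_basis hins.isBasis_closure (hE.subset (M.closure_subset_ground _))
  rw [h1, ncard_insert_of_notMem heI ((hE.subset hF.subset_ground).subset hI.subset),
    rk_eq_of_basis hI (hE.subset hF.subset_ground)]

lemma exists_flat_ssubset_rk (hE : M.E.Finite) (hF : M.IsFlat F) (hrk : rk M F = k + 1) :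
    ∃ G, M.IsFlat G ∧ G ⊂ F ∧ rk M G = k := by
  obtain ⟨I, hI⟩ := M.exists_isBasis F hF.subset_ground
  have hIcard : I.ncard = k + 1 := by rw [← rk_eq_of_basis hI (hE.subset hF.subset_ground), hrk]
  have hIfin : I.Finite := (hE.subset hF.subset_ground).subset hI.subset
  have hne : I.Nonempty := by
    rw [← ncard_pos hIfin]; omega
  obtain ⟨e, he⟩ := hne
  refine ⟨M.closure (I \ {e}), flat_closure _ _, ?_, ?_⟩
  · constructor
    · rw [← hF.closure, ← hI.closure_eq_closure]
      exact M.closure_subset_closure diff_subset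
    · intro hsub
      have heF : e ∈ F := hI.subset he
      exact (hI.indep.notMem_closure_diff_of_mem he) (hsub heF)
  · rw [rk_eq_of_basis (hI.indep.subset diff_subset).isBasis_closure
      (hE.subset (M.closure_subset_ground _)), ncard_diff_singleton_of_mem he]
    omega


/-- `H` covers `F`: both flats, strictly nested, rank goes up by one. -/
def FCov (M : Matroid α) (F H : Set α) : Prop :=
  M.IsFlat F ∧ M.IsFlat H ∧ F ⊂ H ∧ rk M H = rk M F + 1

lemma fcov_closure_insert (hE : M.E.Finite) (hF : M.IsFlat F) (heE : e ∈ M.E) (heF : e ∉ F) :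
    FCov M F (M.closure (insert e F)) := by
  have hsub : F ⊆ M.closure (insert e F) := by
    nth_rewrite 1 [← hF.closure]
    exact M.closure_subset_closure (subset_insert _ _)
  have hmem : e ∈ M.closure (insert e F) :=
    M.subset_closure _ (insert_subset heE hF.subset_ground) (mem_insert _ _)
  exact ⟨hF, flat_closure _ _, ssubset_of_subset_of_ne hsub
      (fun h => heF (h ▸ hmem)), rk_closure_insert hE hF heE heF⟩

lemma FCov.eq_closure_insert (hE : M.E.Finite) (hcov : FCov M F H) (he : e ∈ H) (heF : e ∉ F) :
    H = M.closure (insert e F) := by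
  obtain ⟨hF, hH, hFH, hrk⟩ := hcov
  have heE : e ∈ M.E := hH.subset_ground he
  have hsub : M.closure (insert e F) ⊆ H := by
    rw [← hH.closure]
    exact M.closure_subset_closure (insert_subset he hFH.subset)
  by_contra hne
  have hlt := rk_lt_of_ssubset hE (flat_closure M (insert e F)) hH
    (ssubset_of_subset_of_ne hsub (fun h => hne h.symm))
  rw [rk_closure_insert hE hF heE heF, hrk] at hlt
  omega

open Classical in
lemma ext_count (hE : M.E.Finite) (hF : M.IsFlat F) {t : ℕ} :
    {H | FCov M F H ∧ H.ncard = F.ncard + t}.ncard * t ≤ (M.E \ F).ncard ∧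
    ({H | FCov M F H ∧ H.ncard = F.ncard + t}.ncard * t = (M.E \ F).ncard ↔
      ∀ H, FCov M F H → H.ncard = F.ncard + t) := by
  set T := {H | FCov M F H ∧ H.ncard = F.ncard + t} with hT
  have hTfin : T.Finite := hE.finite_subsets.subset (fun H hH => hH.1.2.1.subset_ground)
  set g : Set α → Finset α := fun H => hE.toFinset.filter (fun x => x ∈ H \ F) with hg
  have hgset : ∀ H, M.IsFlat H → (g H : Set α) = H \ F := by
    intro H hH
    ext x
    simp only [hg, Finset.coe_filter, Finset.mem_coe, hE.mem_toFinset, mem_setOf_eq,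
      mem_diff]
    exact ⟨fun h => h.2, fun h => ⟨hH.subset_ground h.1, h⟩⟩
  have hgcard : ∀ H, M.IsFlat H → (g H).card = (H \ F).ncard := by
    intro H hH
    rw [← ncard_coe_finset, hgset H hH]
  have hcard : ∀ H ∈ T, (g H).card = t := by
    rintro H ⟨hcov, hsize⟩
    rw [hgcard H hcov.2.1, ncard_diff hcov.2.2.1.subset (hE.subset hF.subset_ground),
      hsize, Nat.add_sub_cancel_left]
  have hdisjcov : ∀ H₁ H₂, FCov M F H₁ → FCov M F H₂ → H₁ ≠ H₂ →
      ∀ x, x ∈ H₁ \ F → x ∈ H₂ \ F → False := by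
    intro H₁ H₂ h1 h2 hne x hx1 hx2
    exact hne ((h1.eq_closure_insert hE hx1.1 hx1.2).trans
      (h2.eq_closure_insert hE hx2.1 hx2.2).symm)
  set Tf := hTfin.toFinset with hTf
  have hdisj : ∀ H₁ ∈ Tf, ∀ H₂ ∈ Tf, H₁ ≠ H₂ → Disjoint (g H₁) (g H₂) := by
    intro H₁ h1 H₂ h2 hne
    rw [hTfin.mem_toFinset] at h1 h2
    rw [Finset.disjoint_left]
    intro x hx1 hx2
    rw [← Finset.mem_coe, hgset _ h1.1.2.1] at hx1
    rw [← Finset.mem_coe, hgset _ h2.1.2.1] at hx2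
    exact hdisjcov _ _ h1.1 h2.1 hne x hx1 hx2
  have hbu : (Tf.biUnion g).card = T.ncard * t := by
    rw [Finset.card_biUnion hdisj, ncard_eq_toFinset_card T hTfin]
    rw [Finset.sum_congr rfl (fun H hH => hcard H (hTfin.mem_toFinset.1 hH)),
      Finset.sum_const, smul_eq_mul]
  have hDfin : (M.E \ F).Finite := hE.diff
  have hsubDF : Tf.biUnion g ⊆ hDfin.toFinset := by
    intro x hx
    rw [Finset.mem_biUnion] at hx
    obtain ⟨H, hH, hxH⟩ := hx
    rw [hTfin.mem_toFinset] at hH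
    rw [← Finset.mem_coe, hgset _ hH.1.2.1] at hxH
    rw [hDfin.mem_toFinset]
    exact ⟨hH.1.2.1.subset_ground hxH.1, hxH.2⟩
  have hDcard : hDfin.toFinset.card = (M.E \ F).ncard := (ncard_eq_toFinset_card _ hDfin).symm
  constructor
  · rw [← hbu, ← hDcard]
    exact Finset.card_le_card hsubDF
  constructor
  · -- equality implies all covers have size F.ncard + t
    intro heq H₀ hcov
    by_contra hne
    have hH0T : H₀ ∉ T := fun h => hne h.2
    have hgd : Disjoint (g H₀) (Tf.biUnion g) := by
      rw [Finset.disjoint_left]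
      intro x hx0 hxb
      rw [Finset.mem_biUnion] at hxb
      obtain ⟨H, hH, hxH⟩ := hxb
      rw [hTfin.mem_toFinset] at hH
      rw [← Finset.mem_coe, hgset _ hcov.2.1] at hx0
      rw [← Finset.mem_coe, hgset _ hH.1.2.1] at hxH
      exact hdisjcov _ _ hcov hH.1 (fun h => hH0T (h ▸ hH)) x hx0 hxH
    have hg0sub : g H₀ ⊆ hDfin.toFinset := by
      intro x hx
      rw [← Finset.mem_coe, hgset _ hcov.2.1] at hx
      rw [hDfin.mem_toFinset]
      exact ⟨hcov.2.1.subset_ground hx.1, hx.2⟩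
    have hg0ne : (g H₀).Nonempty := by
      obtain ⟨x, hx1, hx2⟩ := exists_of_ssubset hcov.2.2.1
      refine ⟨x, ?_⟩
      rw [← Finset.mem_coe, hgset _ hcov.2.1]
      exact ⟨hx1, hx2⟩
    have hunion : (g H₀ ∪ Tf.biUnion g).card = (g H₀).card + T.ncard * t := by
      rw [Finset.card_union_of_disjoint hgd, hbu]
    have hle : (g H₀ ∪ Tf.biUnion g).card ≤ (M.E \ F).ncard := by
      rw [← hDcard]
      exact Finset.card_le_card (Finset.union_subset hg0sub hsubDF)
    have := hg0ne.card_pos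
    omega
  · -- all covers have size → equality
    intro hall
    have : hDfin.toFinset ⊆ Tf.biUnion g := by
      intro x hx
      rw [hDfin.mem_toFinset] at hx
      have hcov := fcov_closure_insert hE hF hx.1 hx.2
      have hmem : M.closure (insert x F) ∈ T := ⟨hcov, hall _ hcov⟩
      rw [Finset.mem_biUnion]
      refine ⟨_, hTfin.mem_toFinset.2 hmem, ?_⟩
      rw [← Finset.mem_coe, hgset _ hcov.2.1]
      exact ⟨M.subset_closure _ (insert_subset hx.1 hF.subset_ground) (mem_insert _ _), hx.2⟩
    rw [← hbu, ← hDcard, Finset.Subset.antisymm hsubDF this]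


/-- The set of partial flags of length `k`. -/
def PF (M : Matroid α) (a : ℕ → ℕ) (k : ℕ) : Set (Fin (k + 1) → Set α) :=
  {F : Fin (k + 1) → Set α | StrictMono F ∧
    ∀ i : Fin (k + 1), M.IsFlat (F i) ∧ rk M (F i) = (i : ℕ) ∧ (F i).ncard = a (i : ℕ)}

lemma PF_finite (hE : M.E.Finite) (a : ℕ → ℕ) (k : ℕ) : (PF M a k).Finite := by
  have : PF M a k ⊆ Set.pi univ (fun _ : Fin (k+1) => {S : Set α | S ⊆ M.E}) := by
    intro f hf i _
    exact (hf.2 i).1.subset_ground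
  exact (Set.Finite.pi (fun _ => hE.finite_subsets)).subset this

lemma strictMono_snoc {k : ℕ} {f : Fin (k + 1) → Set α} {H : Set α}
    (hf : StrictMono f) (hH : f (Fin.last k) ⊂ H) : StrictMono (Fin.snoc f H) := by
  intro i j hij
  rcases Fin.eq_castSucc_or_eq_last j with ⟨j', rfl⟩ | rfl
  · have hij' : i < Fin.castSucc j' := hij
    have hne : i ≠ Fin.last (k + 1) := by
      rintro rfl
      exact absurd (hij'.trans (Fin.castSucc_lt_last j')) (lt_irrefl _)
    obtain ⟨i', rfl⟩ := Fin.exists_castSucc_eq.2 hne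
    rw [Fin.snoc_castSucc, Fin.snoc_castSucc]
    exact hf (Fin.castSucc_lt_castSucc_iff.mp hij')
  · obtain ⟨i', rfl⟩ := Fin.exists_castSucc_eq.2 hij.ne
    rw [Fin.snoc_castSucc, Fin.snoc_last]
    exact lt_of_le_of_lt (hf.monotone (Fin.le_last i')) hH

lemma init_mem_PF {k : ℕ} {g : Fin (k + 2) → Set α} (hg : g ∈ PF M a (k + 1)) :
    Fin.init g ∈ PF M a k := by
  refine ⟨fun i j hij => hg.1 (Fin.castSucc_lt_castSucc_iff.mpr hij), fun i => ?_⟩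
  have := hg.2 (Fin.castSucc i)
  simpa only [Fin.init, Fin.coe_castSucc] using this

lemma snoc_mem_PF {k : ℕ} {f : Fin (k + 1) → Set α} {H : Set α}
    (hf : f ∈ PF M a k) (hcov : FCov M (f (Fin.last k)) H) (hH : H.ncard = a (k + 1)) :
    Fin.snoc f H ∈ PF M a (k + 1) := by
  refine ⟨strictMono_snoc hf.1 hcov.2.2.1, fun i => ?_⟩
  rcases Fin.eq_castSucc_or_eq_last i with ⟨i', rfl⟩ | rfl
  · rw [Fin.snoc_castSucc]
    simpa using hf.2 i'
  · rw [Fin.snoc_last]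
    have hrk : rk M H = k + 1 := by
      rw [hcov.2.2.2, (hf.2 (Fin.last k)).2.1, Fin.val_last]
    simpa using ⟨hcov.2.1, hrk, hH⟩

lemma fcov_last_of_mem_PF {k : ℕ} {g : Fin (k + 2) → Set α} (hg : g ∈ PF M a (k + 1)) :
    FCov M (Fin.init g (Fin.last k)) (g (Fin.last (k + 1))) := by
  have h1 := (init_mem_PF hg).2 (Fin.last k)
  have h2 := hg.2 (Fin.last (k + 1))
  refine ⟨h1.1, h2.1, ?_, ?_⟩
  · exact hg.1 (by simp [Fin.init, Fin.lt_iff_val_lt_val])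
  · rw [h1.2.1, h2.2.1, Fin.val_last, Fin.val_last]

open Classical in
lemma card_PF_succ (hE : M.E.Finite) (a : ℕ → ℕ) (k : ℕ) :
    (PF M a (k + 1)).ncard = ∑ f ∈ (PF_finite hE a k).toFinset,
      {H | FCov M (f (Fin.last k)) H ∧ H.ncard = a (k + 1)}.ncard := by
  set S := (PF_finite hE a (k + 1)).toFinset with hS
  set T := (PF_finite hE a k).toFinset with hT
  have hmapsto : ∀ g ∈ S, Fin.init g ∈ T := by
    intro g hg
    rw [(PF_finite hE a (k+1)).mem_toFinset] at hg
    exact (PF_finite hE a k).mem_toFinset.2 (init_mem_PF hg)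
  rw [ncard_eq_toFinset_card _ (PF_finite hE a (k+1)), ← hS,
    Finset.card_eq_sum_card_fiberwise hmapsto]
  refine Finset.sum_congr rfl (fun f hf => ?_)
  rw [(PF_finite hE a k).mem_toFinset] at hf
  have hext : {H | FCov M (f (Fin.last k)) H ∧ H.ncard = a (k + 1)}.Finite :=
    hE.finite_subsets.subset (fun H hH => hH.1.2.1.subset_ground)
  rw [ncard_eq_toFinset_card _ hext]
  apply Finset.card_bij (fun g _ => g (Fin.last (k + 1)))
  · intro g hg
    rw [Finset.mem_filter] at hg
    obtain ⟨hgS, hinit⟩ := hg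
    rw [(PF_finite hE a (k+1)).mem_toFinset] at hgS
    rw [hext.mem_toFinset]
    have := fcov_last_of_mem_PF hgS
    rw [hinit] at this
    exact ⟨this, by simpa using (hgS.2 (Fin.last (k + 1))).2.2⟩
  · intro g₁ hg₁ g₂ hg₂ hlast
    rw [Finset.mem_filter] at hg₁ hg₂
    rw [← Fin.snoc_init_self g₁, ← Fin.snoc_init_self g₂, hg₁.2, hg₂.2, hlast]
  · intro H hH
    rw [hext.mem_toFinset] at hH
    refine ⟨Fin.snoc f H, ?_, by simp⟩
    rw [Finset.mem_filter, (PF_finite hE a (k+1)).mem_toFinset]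
    exact ⟨snoc_mem_PF hf hH.1 hH.2, by simp [Fin.init_snoc]⟩


lemma flat_rk_zero_eq (hE : M.E.Finite) (hF : M.IsFlat F) (h0 : rk M F = 0) :
    F = M.closure ∅ := by
  have hsub : M.closure ∅ ⊆ F := by
    rw [← hF.closure]
    exact M.closure_subset_closure (empty_subset F)
  refine subset_antisymm ?_ hsub
  intro e he
  by_contra hecl
  have hins : M.Indep {e} := by
    have := M.empty_indep.insert_indep_iff_of_notMem (notMem_empty e)
    rw [insert_empty_eq] at this
    exact this.2 ⟨hF.subset_ground he, hecl⟩
  have := indep_ncard_le_rk hE (singleton_subset_iff.2 he) hins hF.subset_ground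
  rw [ncard_singleton, h0] at this
  omega

variable {a : ℕ → ℕ} {r : ℕ}

lemma PF_zero (hE : M.E.Finite) (hloops : (M.closure ∅).ncard = a 0) :
    PF M a 0 = {(fun _ => M.closure ∅ : Fin 1 → Set α)} := by
  ext f
  simp only [mem_singleton_iff]
  constructor
  · intro hf
    funext i
    have h := hf.2 i
    have h0 : (i : ℕ) = 0 := by have := i.is_lt; omega
    rw [h0] at h
    exact flat_rk_zero_eq hE h.1 h.2.1
  · rintro rfl
    refine ⟨fun i j hij => absurd (Fin.lt_iff_val_lt_val.mp hij)
      (by have := i.is_lt; have := j.is_lt; omega), fun i => ?_⟩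
    have h0 : (i : ℕ) = 0 := by have := i.is_lt; omega
    rw [h0]
    exact ⟨flat_closure _ _, rk_loops hE, hloops⟩

/-- Tightness at level `k` : every cover of the top of a length-`k` flag has size `a (k+1)`. -/
def Tight (M : Matroid α) (a : ℕ → ℕ) (k : ℕ) : Prop :=
  ∀ f ∈ PF M a k, ∀ H, FCov M (f (Fin.last k)) H → H.ncard = a (k + 1)

lemma step_main (hE : M.E.Finite) (hcard : M.E.ncard = a r)
    (hmono : ∀ i < r, a i < a (i + 1))
    {k : ℕ} (hk : k < r) :
    ((PF M a (k + 1)).ncard * (a (k + 1) - a k) ≤ (PF M a k).ncard * (a r - a k)) ∧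
    ((PF M a (k + 1)).ncard * (a (k + 1) - a k) = (PF M a k).ncard * (a r - a k) ↔
      Tight M a k) := by
  classical
  have hterm : ∀ f ∈ (PF_finite hE a k).toFinset,
      ({H | FCov M (f (Fin.last k)) H ∧ H.ncard = a (k + 1)}.ncard * (a (k + 1) - a k)
        ≤ a r - a k) ∧
      ({H | FCov M (f (Fin.last k)) H ∧ H.ncard = a (k + 1)}.ncard * (a (k + 1) - a k)
        = a r - a k ↔ ∀ H, FCov M (f (Fin.last k)) H → H.ncard = a (k + 1)) := by
    intro f hf
    rw [(PF_finite hE a k).mem_toFinset] at hf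
    have hfl := hf.2 (Fin.last k)
    rw [Fin.val_last] at hfl
    obtain ⟨hF, hFrk, hFc⟩ := hfl
    have hsum : a k + (a (k + 1) - a k) = a (k + 1) := by
      have := hmono k hk; omega
    have hset : {H | FCov M (f (Fin.last k)) H ∧ H.ncard = a (k + 1)} =
        {H | FCov M (f (Fin.last k)) H ∧
          H.ncard = (f (Fin.last k)).ncard + (a (k + 1) - a k)} := by
      rw [hFc, hsum]
    have hD : (M.E \ f (Fin.last k)).ncard = a r - a k := by
      rw [ncard_diff hF.subset_ground (hE.subset hF.subset_ground), hcard, hFc]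
    obtain ⟨h1, h2⟩ := ext_count hE hF (t := a (k + 1) - a k)
    rw [hFc, hsum, hD] at h1 h2
    exact ⟨h1, h2⟩
  have hNk : (PF M a k).ncard = (PF_finite hE a k).toFinset.card :=
    ncard_eq_toFinset_card _ (PF_finite hE a k)
  rw [card_PF_succ hE a k, Finset.sum_mul, hNk]
  constructor
  · calc ∑ f ∈ (PF_finite hE a k).toFinset,
        {H | FCov M (f (Fin.last k)) H ∧ H.ncard = a (k + 1)}.ncard * (a (k + 1) - a k)
        ≤ ∑ _f ∈ (PF_finite hE a k).toFinset, (a r - a k) :=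
          Finset.sum_le_sum (fun f hf => (hterm f hf).1)
      _ = (PF_finite hE a k).toFinset.card * (a r - a k) := by
          rw [Finset.sum_const, smul_eq_mul]
  · rw [show (PF_finite hE a k).toFinset.card * (a r - a k) =
        ∑ _f ∈ (PF_finite hE a k).toFinset, (a r - a k) by
          rw [Finset.sum_const, smul_eq_mul]]
    rw [Finset.sum_eq_sum_iff_of_le (fun f hf => (hterm f hf).1)]
    constructor
    · intro h f hf H hcov
      have := ((hterm f ((PF_finite hE a k).mem_toFinset.2 hf)).2).1
        (h f ((PF_finite hE a k).mem_toFinset.2 hf))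
      exact this H hcov
    · intro h f hf
      exact (hterm f hf).2.2 (h f ((PF_finite hE a k).mem_toFinset.1 hf))

lemma reach (hE : M.E.Finite) (hloops : (M.closure ∅).ncard = a 0)
    (htight : ∀ k < r, Tight M a k) :
    ∀ i, i ≤ r → ∀ F, M.IsFlat F → rk M F = i →
      F.ncard = a i ∧ ∃ f ∈ PF M a i, f (Fin.last i) = F := by
  intro i
  induction i with
  | zero =>
    intro _ F hF hrk
    have hFeq := flat_rk_zero_eq hE hF hrk
    subst hFeq
    refine ⟨hloops, fun _ => M.closure ∅, ?_, rfl⟩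
    rw [PF_zero hE hloops]
    rfl
  | succ i ih =>
    intro hir F hF hrk
    obtain ⟨G, hG, hGF, hGrk⟩ := exists_flat_ssubset_rk hE hF hrk
    obtain ⟨hGc, f, hf, hfG⟩ := ih (by omega) G hG hGrk
    have hcov : FCov M (f (Fin.last i)) F := by
      rw [hfG]
      exact ⟨hG, hF, hGF, by rw [hrk, hGrk]⟩
    have hFc : F.ncard = a (i + 1) := htight i (by omega) f hf F hcov
    refine ⟨hFc, Fin.snoc f F, snoc_mem_PF hf hcov hFc, ?_⟩
    simp



end Aux

/-- for a rank-`r` matroid on `a r` elements with `a 0` loops, the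
number of flags with flat sizes `a 0 < a 1 < ⋯ < a r` is at most
`∏ (a r − a i)/(a (i+1) − a i)`, with equality iff `M` is a perfect matroid design
with flat-size sequence `a`. -/
theorem pmd_flag_bound (M : Matroid α) (hE : M.E.Finite) (r : ℕ) (a : ℕ → ℕ)
    (hrk : rk M M.E = r) (hcard : M.E.ncard = a r)
    (hloops : (M.closure ∅).ncard = a 0) (hmono : ∀ i < r, a i < a (i + 1)) :
    (flagCount M r a : ℚ) ≤
      ∏ i ∈ Finset.range r, ((a r : ℚ) - (a i : ℚ)) / ((a (i + 1) : ℚ) - (a i : ℚ)) ∧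
    ((flagCount M r a : ℚ) =
      ∏ i ∈ Finset.range r, ((a r : ℚ) - (a i : ℚ)) / ((a (i + 1) : ℚ) - (a i : ℚ)) ↔
        IsPMD M r a) := by
  classical
  have hale : ∀ i j, i ≤ j → j ≤ r → a i ≤ a j := by
    intro i j hij hjr
    induction j with
    | zero => have : i = 0 := by omega
              simp [this]
    | succ n ih =>
      rcases Nat.eq_or_lt_of_le hij with rfl | hlt
      · exact le_rfl
      · exact le_trans (ih (by omega) (by omega)) (le_of_lt (hmono n (by omega)))
  set c : ℕ → ℚ := fun i => ((a r : ℚ) - (a i : ℚ)) / ((a (i + 1) : ℚ) - (a i : ℚ)) with hc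
  have hcpos : ∀ k, k < r → 0 < c k := by
    intro k hk
    apply div_pos
    · have h1 : a k < a r := lt_of_lt_of_le (hmono k hk) (hale (k + 1) r hk le_rfl)
      have := (Nat.cast_lt (α := ℚ)).2 h1
      linarith
    · have := (Nat.cast_lt (α := ℚ)).2 (hmono k hk)
      linarith
  set N : ℕ → ℕ := fun k => (PF M a k).ncard with hN
  have hflag : flagCount M r a = N r := rfl
  have hN0 : N 0 = 1 := by
    rw [hN]
    simp only [PF_zero hE hloops]
    exact ncard_singleton _
  have hkey : ∀ k, k < r → ((N (k + 1) : ℚ) ≤ c k * N k) ∧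
      (((N (k + 1) : ℚ) = c k * N k) ↔ Tight M a k) := by
    intro k hk
    obtain ⟨h1, h2⟩ := step_main hE hcard hmono hk
    have hd : (0 : ℚ) < (a (k + 1) : ℚ) - a k := by
      have := (Nat.cast_lt (α := ℚ)).2 (hmono k hk)
      linarith
    have hcN : c k * N k = ((N k * (a r - a k) : ℕ) : ℚ) / ((a (k + 1) : ℚ) - a k) := by
      rw [hc]
      push_cast [Nat.cast_sub (hale k r (le_of_lt hk) le_rfl)]
      ring
    have hl : ((N (k + 1) : ℚ) * ((a (k + 1) : ℚ) - a k)) =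
        ((N (k + 1) * (a (k + 1) - a k) : ℕ) : ℚ) := by
      push_cast [Nat.cast_sub (le_of_lt (hmono k hk))]
      ring
    constructor
    · rw [hcN, le_div_iff₀ hd, hl]
      exact_mod_cast h1
    · rw [hcN, eq_div_iff (ne_of_gt hd), hl, ← h2]
      exact Nat.cast_inj
  have hup : ∀ k, k ≤ r → (N k : ℚ) ≤ ∏ i ∈ Finset.range k, c i := by
    intro k
    induction k with
    | zero => intro _; simp [hN0]
    | succ n ih =>
      intro h
      have h2 := ih (by omega)
      have hcn : 0 ≤ c n := le_of_lt (hcpos n (by omega))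
      calc (N (n + 1) : ℚ) ≤ c n * N n := (hkey n (by omega)).1
        _ ≤ c n * ∏ i ∈ Finset.range n, c i := mul_le_mul_of_nonneg_left h2 hcn
        _ = ∏ i ∈ Finset.range (n + 1), c i := by rw [Finset.prod_range_succ]; ring
  have hupEq : (∀ k, k < r → Tight M a k) →
      ∀ k, k ≤ r → (N k : ℚ) = ∏ i ∈ Finset.range k, c i := by
    intro ht k
    induction k with
    | zero => intro _; simp [hN0]
    | succ n ih =>
      intro h
      rw [(hkey n (by omega)).2.mpr (ht n (by omega)), ih (by omega),
        Finset.prod_range_succ]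
      ring
  have hdown : ∀ j, j ≤ r → (N r : ℚ) ≤ (∏ i ∈ Finset.Ico (r - j) r, c i) * N (r - j) := by
    intro j
    induction j with
    | zero => intro _; simp
    | succ n ih =>
      intro h
      have hk1 : r - n = (r - (n + 1)) + 1 := by omega
      have hklt : r - (n + 1) < r := by omega
      have hprodnn : 0 ≤ ∏ i ∈ Finset.Ico (r - n) r, c i :=
        Finset.prod_nonneg (fun i hi => le_of_lt (hcpos i (Finset.mem_Ico.1 hi).2))
      calc (N r : ℚ) ≤ (∏ i ∈ Finset.Ico (r - n) r, c i) * N (r - n) := ih (by omega)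
        _ ≤ (∏ i ∈ Finset.Ico (r - n) r, c i) * (c (r - (n + 1)) * N (r - (n + 1))) := by
            apply mul_le_mul_of_nonneg_left _ hprodnn
            rw [hk1]
            exact (hkey _ hklt).1
        _ = (∏ i ∈ Finset.Ico (r - (n + 1)) r, c i) * N (r - (n + 1)) := by
            rw [Finset.prod_eq_prod_Ico_succ_bot hklt c, ← hk1]
            ring
  have hmain2 : ((N r : ℚ) = ∏ i ∈ Finset.range r, c i) →
      ∀ k, k ≤ r → (N k : ℚ) = ∏ i ∈ Finset.range k, c i := by
    intro heq k hk
    refine le_antisymm (hup k hk) ?_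
    have hd := hdown (r - k) (by omega)
    rw [show r - (r - k) = k by omega] at hd
    have hsplit : (∏ i ∈ Finset.range k, c i) * ∏ i ∈ Finset.Ico k r, c i =
        ∏ i ∈ Finset.range r, c i := Finset.prod_range_mul_prod_Ico c hk
    have hppos : 0 < ∏ i ∈ Finset.Ico k r, c i :=
      Finset.prod_pos (fun i hi => hcpos i (Finset.mem_Ico.1 hi).2)
    rw [heq, ← hsplit, mul_comm (∏ i ∈ Finset.Ico k r, c i) (N k : ℚ)] at hd
    exact le_of_mul_le_mul_right hd hppos
  have hTight_of_eq : ((N r : ℚ) = ∏ i ∈ Finset.range r, c i) → ∀ k, k < r → Tight M a k := by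
    intro heq k hk
    apply (hkey k hk).2.mp
    rw [hmain2 heq (k + 1) (by omega), hmain2 heq k (by omega), Finset.prod_range_succ]
    ring
  refine ⟨hflag ▸ hup r le_rfl, ?_, ?_⟩
  · intro heq
    intro i hi F hF hrki
    exact (reach hE hloops (hTight_of_eq (by rw [← hflag]; exact_mod_cast heq)) i hi F hF hrki).1
  · intro hpmd
    have ht : ∀ k, k < r → Tight M a k := by
      intro k hk f hf H hcov
      have hrkH : rk M H = k + 1 := by
        rw [hcov.2.2.2, (hf.2 (Fin.last k)).2.1, Fin.val_last]
      exact hpmd (k + 1) (by omega) H hcov.2.1 hrkH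
    rw [hflag]
    exact hupEq ht r le_rfl

end MatroidPaper
end
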